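/- If a selection policy on an (n,ℓ)-CSL graph leaves at least one CSL component with no marked node, then there exist two non-isomorphic (n,ℓ)-CSL graphs agreeing on all covered components whose marked-bag representations are identical; hence the policy cannot identify the isomorphism type. -/
import Mathlib


/-- Abstract form of the necessity argument. An `(n,ℓ)`-CSL graph is determined by an
injective assignment `g : Fin ℓ → C` of pairwise non-isomorphic CSL isomorphism types to
its `ℓ` components; a node-marking policy covers the set `S` of components containing a
marked node. If some component is uncovered (`∃ i, i ∉ S`) and there are more than `ℓ`
isomorphism types of CSL components available (`ℓ < Fintype.card C`), then there is
another `(n,ℓ)`-CSL graph `g'` agreeing with `g` on all covered components (hence with an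
identical marked-bag representation) yet non-isomorphic to `g` (no permutation of
components matches them); hence the policy cannot identify the isomorphism type. -/
theorem uncovered_component_not_identifiable {ℓ : ℕ} {C : Type*} [Fintype C]
    (hbig : ℓ < Fintype.card C) (g : Fin ℓ → C) (hg : Function.Injective g)
    (S : Set (Fin ℓ)) (hmiss : ∃ i, i ∉ S) :
    ∃ g' : Fin ℓ → C, Function.Injective g' ∧
      (∀ i ∈ S, g' i = g i) ∧
      ¬ ∃ σ : Equiv.Perm (Fin ℓ), g' = g ∘ σ := by
  obtain ⟨i, hi⟩ := hmiss
  -- g is not surjective, pick c outside the range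
  have hns : ¬ Function.Surjective g := fun hs => by
    have := Fintype.card_le_of_surjective g hs
    simp [Fintype.card_fin] at this
    omega
  obtain ⟨c, hc⟩ := not_forall.mp hns
  have hc : c ∉ Set.range g := by simpa [Set.range] using hc
  refine ⟨Function.update g i c, ?_, ?_, ?_⟩
  · intro a b hab
    by_cases ha : a = i <;> by_cases hb : b = i <;>
      simp [Function.update, ha, hb] at hab ⊢
    · exact absurd ⟨b, hab.symm⟩ hc
    · exact absurd ⟨a, hab⟩ hc
    · exact hg hab
  · intro j hj
    have : j ≠ i := fun h => hi (h ▸ hj)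
    simp [Function.update, this]
  · rintro ⟨σ, hσ⟩
    have : c = g (σ i) := by
      have := congrFun hσ i
      simpa using this
    exact hc ⟨σ i, this.symm⟩
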